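/- Fix m > 0 and e ≠ 0 and let φ₀ be a Choquard ground state. Assume in addition that among Schwartz-class real-valued functions the kernel of L₀ is spanned by φ₀ and the kernel of L₁ is spanned by ∂₁φ₀, ∂₂φ₀, ∂₃φ₀. Then the Schwartz-class solutions (U, V) of 𝔐(U, V) = 0 (where 𝔐(U, V) = (2mU + P̸V, P̸U − (1/(2m))V + Â⁰V + 2e²φ₀ N*(φ₀ Re V₁) e₁)) are exactly the pairs with U = −(1/(2m))P̸V and V = (a·∇φ₀) e₁ + i b φ₀ e₁ + c φ₀ e₂, where a ∈ ℝ³, b ∈ ℝ, and c ∈ ℂ. In particular this kernel is a real vector space of dimension 6. -/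

import Mathlib

open MeasureTheory Real

noncomputable section

/-- Partial derivative in the `j`-th coordinate direction on `ℝ³`. -/
def pd {E : Type*} [NormedAddCommGroup E] [NormedSpace ℝ E]
    (j : Fin 3) (f : EuclideanSpace ℝ (Fin 3) → E)
    (x : EuclideanSpace ℝ (Fin 3)) : E :=
  fderiv ℝ f x (EuclideanSpace.single j 1)

/-- Laplacian on `ℝ³`, `Δf = Σⱼ ∂ⱼ∂ⱼ f`. -/
def lap {E : Type*} [NormedAddCommGroup E] [NormedSpace ℝ E]
    (f : EuclideanSpace ℝ (Fin 3) → E) (x : EuclideanSpace ℝ (Fin 3)) : E :=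
  ∑ j : Fin 3, pd j (pd j f) x

/-- Convolution with the Newtonian potential `N(x) = 1/(4π|x|)` on `ℝ³`,
for real-valued functions. -/
def Nconv (h : EuclideanSpace ℝ (Fin 3) → ℝ) (x : EuclideanSpace ℝ (Fin 3)) : ℝ :=
  ∫ y, h y / (4 * π * ‖x - y‖)

/-- A Choquard ground state: a strictly positive, spherically symmetric,
Schwartz-class function `φ₀ : ℝ³ → ℝ` with
`(1/(2m))φ₀ − (1/(2m))Δφ₀ − e²(N*φ₀²)φ₀ = 0`. -/
def IsChoquardGroundState (m e : ℝ) (φ₀ : EuclideanSpace ℝ (Fin 3) → ℝ) : Prop :=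
  (∀ x, 0 < φ₀ x) ∧
  (∀ x y : EuclideanSpace ℝ (Fin 3), ‖x‖ = ‖y‖ → φ₀ x = φ₀ y) ∧
  (∃ Φ : SchwartzMap (EuclideanSpace ℝ (Fin 3)) ℝ, ∀ x, Φ x = φ₀ x) ∧
  (∀ x, (1 / (2 * m)) * φ₀ x - (1 / (2 * m)) * lap φ₀ x
      - e ^ 2 * Nconv (fun y => (φ₀ y) ^ 2) x * φ₀ x = 0)

/-- The linearized operator `L₀v = −(1/(2m))Δv + (1/(2m))v − e²(N*φ₀²)v`. -/
def L0 (m e : ℝ) (φ₀ v : EuclideanSpace ℝ (Fin 3) → ℝ)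
    (x : EuclideanSpace ℝ (Fin 3)) : ℝ :=
  -(1 / (2 * m)) * lap v x + (1 / (2 * m)) * v x
    - e ^ 2 * Nconv (fun y => (φ₀ y) ^ 2) x * v x

/-- The linearized operator `L₁v = L₀v − 2e²(N*(φ₀v))φ₀`. -/
def L1 (m e : ℝ) (φ₀ v : EuclideanSpace ℝ (Fin 3) → ℝ)
    (x : EuclideanSpace ℝ (Fin 3)) : ℝ :=
  L0 m e φ₀ v x - 2 * e ^ 2 * Nconv (fun y => φ₀ y * v y) x * φ₀ x

/-- The Pauli matrices `σ₁, σ₂, σ₃`. -/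
def pauli : Fin 3 → Matrix (Fin 2) (Fin 2) ℂ :=
  ![!![0, 1; 1, 0], !![0, -Complex.I; Complex.I, 0], !![1, 0; 0, -1]]

/-- `σ·∇ = σ₁∂₁ + σ₂∂₂ + σ₃∂₃` acting on `f : ℝ³ → ℂ²`. -/
def sigmaDeriv (f : EuclideanSpace ℝ (Fin 3) → Fin 2 → ℂ)
    (x : EuclideanSpace ℝ (Fin 3)) : Fin 2 → ℂ :=
  ∑ j : Fin 3, (pauli j).mulVec (pd j f x)

/-- `P̸ = −i σ·∇`. -/
def Pslash (f : EuclideanSpace ℝ (Fin 3) → Fin 2 → ℂ)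
    (x : EuclideanSpace ℝ (Fin 3)) : Fin 2 → ℂ :=
  (-Complex.I) • sigmaDeriv f x

/-- The operator `𝔐` (derivative of the rescaled Dirac–Maxwell map at the
nonrelativistic limit point):
`𝔐(U,V) = (2mU + P̸V, P̸U − (1/(2m))V + Â⁰V + 2e² φ₀ N*(φ₀ Re V₁) e₁)`,
where `Â⁰ = e²N*φ₀²`, `V₁` is the first component of `V`, `e₁ = (1,0)`. -/
def Mop (m e : ℝ) (φ₀ : EuclideanSpace ℝ (Fin 3) → ℝ)
    (U V : EuclideanSpace ℝ (Fin 3) → Fin 2 → ℂ) :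
    (EuclideanSpace ℝ (Fin 3) → Fin 2 → ℂ) ×
      (EuclideanSpace ℝ (Fin 3) → Fin 2 → ℂ) :=
  (fun x => ((2 * m : ℝ) : ℂ) • U x + Pslash V x,
   fun x => Pslash U x - ((1 / (2 * m) : ℝ) : ℂ) • V x
     + ((e ^ 2 * Nconv (fun y => (φ₀ y) ^ 2) x : ℝ) : ℂ) • V x
     + ((2 * e ^ 2 * Nconv (fun y => φ₀ y * (V y 0).re) x * φ₀ x : ℝ) : ℂ) •
         (![1, 0] : Fin 2 → ℂ))

/-!
The first component of `𝔐(U, V) = 0` says `U = -(1/(2m)) P̸V`. Since the Pauli matrices anticommute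
and square to the identity, `P̸² = -Δ`, so after substituting `U` the second component becomes
`-(L₁ Re V₁ + i L₀ Im V₁, L₀ Re V₂ + i L₀ Im V₂)`. The real and imaginary parts of the components
of a Schwartz spinor are Schwartz functions, so the nondegeneracy of `φ₀` identifies each of these
four real functions, and they assemble into `V = (a·∇φ₀ + i b φ₀) e₁ + c φ₀ e₂`.
-/

local notation "ℝ³" => EuclideanSpace ℝ (Fin 3)

open scoped Matrix

section PartialDerivatives

variable {F G : Type*} [NormedAddCommGroup F] [NormedSpace ℝ F]
  [NormedAddCommGroup G] [NormedSpace ℝ G] {f : ℝ³ → F} {x : ℝ³}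

theorem pd_comp_clm (L : F →L[ℝ] G) (hf : DifferentiableAt ℝ f x) (j : Fin 3) :
    pd j (fun y => L (f y)) x = L (pd j f x) := by
  simp [pd, fderiv_fun_comp x L.differentiableAt hf]

theorem pd_sum {ι : Type*} (s : Finset ι) {g : ι → ℝ³ → F}
    (hg : ∀ i ∈ s, DifferentiableAt ℝ (g i) x) (j : Fin 3) :
    pd j (fun y => ∑ i ∈ s, g i y) x = ∑ i ∈ s, pd j (g i) x := by
  simp [pd, fderiv_fun_sum hg]

theorem pd_const_smul {R : Type*} [Semiring R] [Module R F] [SMulCommClass ℝ R F]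
    [ContinuousConstSMul R F] (hf : DifferentiableAt ℝ f x) (c : R) (j : Fin 3) :
    pd j (fun y => c • f y) x = c • pd j f x := by
  simp [pd, fderiv_fun_const_smul hf c]

theorem ContDiff.differentiableAt_pd (hf : ContDiff ℝ 2 f) (j : Fin 3) (x : ℝ³) :
    DifferentiableAt ℝ (pd j f) x :=
  ((hf.fderiv_right (m := 1) (by norm_num)).clm_apply contDiff_const).differentiable one_ne_zero x

theorem pd_pd_comm (hf : ContDiff ℝ 2 f) (j k : Fin 3) (x : ℝ³) :
    pd j (pd k f) x = pd k (pd j f) x := by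
  have hdf : DifferentiableAt ℝ (fderiv ℝ f) x :=
    (hf.fderiv_right (m := 1) (by norm_num)).differentiable one_ne_zero x
  have second : ∀ a b : Fin 3, pd a (pd b f) x =
      fderiv ℝ (fderiv ℝ f) x (EuclideanSpace.single a 1) (EuclideanSpace.single b 1) :=
    fun a b => pd_comp_clm (ContinuousLinearMap.apply ℝ F (EuclideanSpace.single b 1)) hdf a
  rw [second, second]
  exact (hf.contDiffAt.isSymmSndFDerivAt (by simp)).eq _ _

theorem lap_comp_clm (L : F →L[ℝ] G) (hf : ContDiff ℝ 2 f) (x : ℝ³) :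
    lap (fun y => L (f y)) x = L (lap f x) := by
  have hdf : Differentiable ℝ f := hf.differentiable two_ne_zero
  have hpd : ∀ j, pd j (fun y => L (f y)) = fun y => L (pd j f y) :=
    fun j => funext fun y => pd_comp_clm L (hdf y) j
  simp only [lap, map_sum, hpd]
  exact Finset.sum_congr rfl fun j _ =>
    pd_comp_clm L (hf.differentiableAt_pd j x) j

end PartialDerivatives

theorem SchwartzMap.coe_postcompCLM {E F G : Type*} [NormedAddCommGroup E] [NormedSpace ℝ E]
    [NormedAddCommGroup F] [NormedSpace ℝ F] [NormedAddCommGroup G] [NormedSpace ℝ G]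
    (L : F →L[ℝ] G) (f : SchwartzMap E F) : ⇑(f.postcompCLM L) = fun x => L (f x) :=
  funext (SchwartzMap.postcompCLM_apply L f)

theorem pauli_mul_add_pauli_mul (j k : Fin 3) :
    pauli j * pauli k + pauli k * pauli j = if j = k then 2 else 0 := by
  fin_cases j <;> fin_cases k <;>
    simp [pauli, Matrix.ofNat_fin_two, ← Matrix.of_zero, one_add_one_eq_two]

theorem sum_pauli_mul_pauli_mulVec {D : Fin 3 → Fin 3 → Fin 2 → ℂ}
    (hD : ∀ j k, D j k = D k j) :
    ∑ j, ∑ k, (pauli j * pauli k) *ᵥ D j k = ∑ j, D j j := by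
  have twice : (2 : ℂ) • ∑ j, ∑ k, (pauli j * pauli k) *ᵥ D j k = (2 : ℂ) • ∑ j, D j j :=
    calc (2 : ℂ) • ∑ j, ∑ k, (pauli j * pauli k) *ᵥ D j k
        = ∑ j, ∑ k, (pauli j * pauli k + pauli k * pauli j) *ᵥ D j k := by
          rw [two_smul]
          nth_rewrite 2 [Finset.sum_comm]
          simp only [← Finset.sum_add_distrib, Matrix.add_mulVec, hD]
      _ = (2 : ℂ) • ∑ j, D j j := by
          simp only [pauli_mul_add_pauli_mul, Finset.smul_sum]
          refine Finset.sum_congr rfl fun j _ => ?_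
          rw [Fintype.sum_eq_single j fun k hk => by simp [Ne.symm hk]]
          simp [Matrix.ofNat_mulVec]
  exact smul_right_injective _ two_ne_zero twice

section MulVec

variable {n p : Type*} [Fintype n] [Fintype p] (M : Matrix p n ℂ) {g : ℝ³ → n → ℂ} {x : ℝ³}

theorem DifferentiableAt.const_mulVec (hg : DifferentiableAt ℝ g x) :
    DifferentiableAt ℝ (fun y => M *ᵥ g y) x :=
  (LinearMap.toContinuousLinearMap ((Matrix.mulVecLin M).restrictScalars ℝ)).differentiableAt.comp
    x hg

theorem pd_mulVec (hg : DifferentiableAt ℝ g x) (j : Fin 3) :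
    pd j (fun y => M *ᵥ g y) x = M *ᵥ pd j g x :=
  pd_comp_clm (LinearMap.toContinuousLinearMap ((Matrix.mulVecLin M).restrictScalars ℝ)) hg j

end MulVec

theorem Pslash_eq (f : ℝ³ → Fin 2 → ℂ) :
    Pslash f = fun y => -Complex.I • ∑ k, pauli k *ᵥ pd k f y := rfl

theorem Pslash_const_smul (c : ℂ) {f : ℝ³ → Fin 2 → ℂ} (hf : Differentiable ℝ f) (x : ℝ³) :
    Pslash (fun y => c • f y) x = c • Pslash f x := by
  simp only [Pslash_eq, pd_const_smul (hf x), Matrix.mulVec_smul, ← Finset.smul_sum]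
  exact smul_comm _ _ _

theorem pd_Pslash {f : ℝ³ → Fin 2 → ℂ} (hf : ContDiff ℝ 2 f) (j : Fin 3) (x : ℝ³) :
    pd j (Pslash f) x = -Complex.I • ∑ k, pauli k *ᵥ pd j (pd k f) x := by
  have hpd := fun k => hf.differentiableAt_pd k x
  rw [Pslash_eq, pd_const_smul (DifferentiableAt.fun_sum fun k _ => (hpd k).const_mulVec _),
    pd_sum _ (fun k _ => (hpd k).const_mulVec _)]
  simp only [pd_mulVec _ (hpd _)]

theorem ContDiff.differentiable_Pslash {f : ℝ³ → Fin 2 → ℂ} (hf : ContDiff ℝ 2 f) :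
    Differentiable ℝ (Pslash f) := fun y => by
  rw [Pslash_eq]
  exact (DifferentiableAt.fun_sum (A := fun k y => pauli k *ᵥ pd k f y) fun k _ =>
    (hf.differentiableAt_pd k y).const_mulVec _).fun_const_smul _

theorem Pslash_Pslash {f : ℝ³ → Fin 2 → ℂ} (hf : ContDiff ℝ 2 f) (x : ℝ³) :
    Pslash (Pslash f) x = -lap f x := by
  calc Pslash (Pslash f) x
      = -Complex.I • ∑ j, pauli j *ᵥ (-Complex.I • ∑ k, pauli k *ᵥ pd j (pd k f) x) := by
        simp only [congrFun (Pslash_eq (Pslash f)) x, pd_Pslash hf]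
    _ = -∑ j, ∑ k, (pauli j * pauli k) *ᵥ pd j (pd k f) x := by
        simp only [Matrix.mulVec_smul, Matrix.mulVec_sum, Matrix.mulVec_mulVec, ← Finset.smul_sum,
          smul_smul, neg_mul_neg, Complex.I_mul_I, neg_one_smul]
    _ = -lap f x := by rw [sum_pauli_mul_pauli_mulVec fun j k => pd_pd_comm hf j k x]; rfl

theorem Mop_fst_eq_zero_iff {m : ℝ} (hm : m ≠ 0) (e : ℝ) (φ₀ : ℝ³ → ℝ)
    (U V : ℝ³ → Fin 2 → ℂ) :
    (∀ x, (Mop m e φ₀ U V).1 x = 0) ↔ ∀ x, U x = -((1 / (2 * m) : ℝ) : ℂ) • Pslash V x := by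
  have h2m : ((2 * m : ℝ) : ℂ) ≠ 0 := by exact_mod_cast mul_ne_zero two_ne_zero hm
  refine forall_congr' fun x => ?_
  rw [Mop, add_eq_zero_iff_eq_neg, ← eq_inv_smul_iff₀ h2m, neg_smul, smul_neg, ← Complex.ofReal_inv,
    one_div]

theorem lap_apply_eq_re_add_im {f : ℝ³ → Fin 2 → ℂ} (hf : ContDiff ℝ 2 f) (i : Fin 2) (x : ℝ³) :
    lap f x i =
      ((lap (fun y => (f y i).re) x : ℝ) : ℂ) + Complex.I * (lap (fun y => (f y i).im) x : ℝ) := by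
  have hre := lap_comp_clm (Complex.reCLM ∘L ContinuousLinearMap.proj (R := ℝ) i) hf x
  have him := lap_comp_clm (Complex.imCLM ∘L ContinuousLinearMap.proj (R := ℝ) i) hf x
  simp only [ContinuousLinearMap.comp_apply, ContinuousLinearMap.proj_apply, Complex.reCLM_apply,
    Complex.imCLM_apply] at hre him
  rw [hre, him, mul_comm, Complex.re_add_im]

theorem Mop_snd_apply {m : ℝ} (e : ℝ) (φ₀ : ℝ³ → ℝ) {V : ℝ³ → Fin 2 → ℂ} (hV : ContDiff ℝ 2 V)
    (x : ℝ³) :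
    (Mop m e φ₀ (fun y => -((1 / (2 * m) : ℝ) : ℂ) • Pslash V y) V).2 x =
      -![(L1 m e φ₀ (fun y => (V y 0).re) x : ℂ) + Complex.I * L0 m e φ₀ (fun y => (V y 0).im) x,
        (L0 m e φ₀ (fun y => (V y 1).re) x : ℂ) +
          Complex.I * L0 m e φ₀ (fun y => (V y 1).im) x] := by
  simp only [Mop, Pslash_const_smul _ hV.differentiable_Pslash, Pslash_Pslash hV]
  ext i
  fin_cases i <;> apply Complex.ext <;> simp [L0, L1, lap_apply_eq_re_add_im hV] <;> ring

theorem Mop_snd_eq_zero_iff {m : ℝ} (e : ℝ) (φ₀ : ℝ³ → ℝ) {V : ℝ³ → Fin 2 → ℂ}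
    (hV : ContDiff ℝ 2 V) (x : ℝ³) :
    (Mop m e φ₀ (fun y => -((1 / (2 * m) : ℝ) : ℂ) • Pslash V y) V).2 x = 0 ↔
      L1 m e φ₀ (fun y => (V y 0).re) x = 0 ∧ L0 m e φ₀ (fun y => (V y 0).im) x = 0 ∧
      L0 m e φ₀ (fun y => (V y 1).re) x = 0 ∧ L0 m e φ₀ (fun y => (V y 1).im) x = 0 := by
  rw [Mop_snd_apply e φ₀ hV]
  simp [funext_iff, Fin.forall_fin_two, Complex.ext_iff, and_assoc]

theorem Mop_eq_zero_iff {m : ℝ} (hm : m ≠ 0) (e : ℝ) (φ₀ : ℝ³ → ℝ) (U : ℝ³ → Fin 2 → ℂ)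
    {V : ℝ³ → Fin 2 → ℂ} (hV : ContDiff ℝ 2 V) :
    ((∀ x, (Mop m e φ₀ U V).1 x = 0) ∧ (∀ x, (Mop m e φ₀ U V).2 x = 0)) ↔
      (∀ x, U x = -((1 / (2 * m) : ℝ) : ℂ) • Pslash V x) ∧
      (∀ x, L1 m e φ₀ (fun y => (V y 0).re) x = 0) ∧
      (∀ x, L0 m e φ₀ (fun y => (V y 0).im) x = 0) ∧
      (∀ x, L0 m e φ₀ (fun y => (V y 1).re) x = 0) ∧
      (∀ x, L0 m e φ₀ (fun y => (V y 1).im) x = 0) := by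
  rw [Mop_fst_eq_zero_iff hm]
  refine and_congr_right fun hU => ?_
  obtain rfl : U = fun y => -((1 / (2 * m) : ℝ) : ℂ) • Pslash V y := funext hU
  simp only [Mop_snd_eq_zero_iff e φ₀ hV, forall_and]

theorem spinor_eq_iff (z : Fin 2 → ℂ) (p b t : ℝ) (c : ℂ) :
    z = ((p : ℂ) + Complex.I * b * t) • ![1, 0] + (c * t) • ![0, 1] ↔
      (z 0).re = p ∧ (z 0).im = b * t ∧ (z 1).re = c.re * t ∧ (z 1).im = c.im * t := by
  simp [funext_iff, Fin.forall_fin_two, Complex.ext_iff, and_assoc]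

theorem Mop_kernel_characterization_general
    (m e : ℝ) (hm : 0 < m)
    (φ₀ : EuclideanSpace ℝ (Fin 3) → ℝ)
    (hker0 : ∀ v : SchwartzMap (EuclideanSpace ℝ (Fin 3)) ℝ,
      (∀ x, L0 m e φ₀ (⇑v) x = 0) ↔ ∃ c : ℝ, ∀ x, v x = c * φ₀ x)
    (hker1 : ∀ v : SchwartzMap (EuclideanSpace ℝ (Fin 3)) ℝ,
      (∀ x, L1 m e φ₀ (⇑v) x = 0) ↔
        ∃ a : Fin 3 → ℝ, ∀ x, v x = ∑ j : Fin 3, a j * pd j φ₀ x)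
    (U V : SchwartzMap (EuclideanSpace ℝ (Fin 3)) (Fin 2 → ℂ)) :
    ((∀ x, (Mop m e φ₀ (⇑U) (⇑V)).1 x = 0) ∧
     (∀ x, (Mop m e φ₀ (⇑U) (⇑V)).2 x = 0))
    ↔
    (∃ (a : Fin 3 → ℝ) (b : ℝ) (c : ℂ),
      (∀ x, U x = -(((1 / (2 * m) : ℝ)) : ℂ) • Pslash (⇑V) x) ∧
      (∀ x, V x =
        (((∑ j : Fin 3, a j * pd j φ₀ x : ℝ) : ℂ) + Complex.I * (b : ℂ) * (φ₀ x : ℂ)) •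
          (![1, 0] : Fin 2 → ℂ)
        + (c * (φ₀ x : ℂ)) • (![0, 1] : Fin 2 → ℂ))) := by
  have re0 := hker1 (V.postcompCLM (Complex.reCLM ∘L ContinuousLinearMap.proj 0))
  have im0 := hker0 (V.postcompCLM (Complex.imCLM ∘L ContinuousLinearMap.proj 0))
  have re1 := hker0 (V.postcompCLM (Complex.reCLM ∘L ContinuousLinearMap.proj 1))
  have im1 := hker0 (V.postcompCLM (Complex.imCLM ∘L ContinuousLinearMap.proj 1))
  simp only [SchwartzMap.coe_postcompCLM, ContinuousLinearMap.comp_apply,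
    ContinuousLinearMap.proj_apply, Complex.reCLM_apply, Complex.imCLM_apply] at re0 im0 re1 im1
  rw [Mop_eq_zero_iff hm.ne' e φ₀ U (V.smooth 2), re0, im0, re1, im1]
  constructor
  · rintro ⟨hU, ⟨a, ha⟩, ⟨b, hb⟩, ⟨cr, hcr⟩, ⟨ci, hci⟩⟩
    exact ⟨a, b, ⟨cr, ci⟩, hU, fun x => (spinor_eq_iff _ _ _ _ _).2 ⟨ha x, hb x, hcr x, hci x⟩⟩
  · rintro ⟨a, b, c, hU, hV⟩
    have h x := (spinor_eq_iff _ _ _ _ _).1 (hV x)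
    exact ⟨hU, ⟨a, fun x => (h x).1⟩, ⟨b, fun x => (h x).2.1⟩, ⟨c.re, fun x => (h x).2.2.1⟩,
      ⟨c.im, fun x => (h x).2.2.2⟩⟩

/-- assuming the nondegeneracy of the Choquard ground state
(among Schwartz functions, `ker L₀ = span{φ₀}` and
`ker L₁ = span{∂₁φ₀, ∂₂φ₀, ∂₃φ₀}`), the Schwartz-class kernel of `𝔐`
consists exactly of the pairs `U = −(1/(2m))P̸V`,
`V = (a·∇φ₀)e₁ + ibφ₀e₁ + cφ₀e₂` with `a ∈ ℝ³`, `b ∈ ℝ`, `c ∈ ℂ`. -/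
theorem Mop_kernel_characterization
    (m e : ℝ) (hm : 0 < m) (he : e ≠ 0)
    (φ₀ : EuclideanSpace ℝ (Fin 3) → ℝ)
    (hφ₀ : IsChoquardGroundState m e φ₀)
    (hker0 : ∀ v : SchwartzMap (EuclideanSpace ℝ (Fin 3)) ℝ,
      (∀ x, L0 m e φ₀ (⇑v) x = 0) ↔ ∃ c : ℝ, ∀ x, v x = c * φ₀ x)
    (hker1 : ∀ v : SchwartzMap (EuclideanSpace ℝ (Fin 3)) ℝ,
      (∀ x, L1 m e φ₀ (⇑v) x = 0) ↔
        ∃ a : Fin 3 → ℝ, ∀ x, v x = ∑ j : Fin 3, a j * pd j φ₀ x)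
    (U V : SchwartzMap (EuclideanSpace ℝ (Fin 3)) (Fin 2 → ℂ)) :
    ((∀ x, (Mop m e φ₀ (⇑U) (⇑V)).1 x = 0) ∧
     (∀ x, (Mop m e φ₀ (⇑U) (⇑V)).2 x = 0))
    ↔
    (∃ (a : Fin 3 → ℝ) (b : ℝ) (c : ℂ),
      (∀ x, U x = -(((1 / (2 * m) : ℝ)) : ℂ) • Pslash (⇑V) x) ∧
      (∀ x, V x =
        (((∑ j : Fin 3, a j * pd j φ₀ x : ℝ) : ℂ) + Complex.I * (b : ℂ) * (φ₀ x : ℂ)) •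
          (![1, 0] : Fin 2 → ℂ)
        + (c * (φ₀ x : ℂ)) • (![0, 1] : Fin 2 → ℂ))) :=
  Mop_kernel_characterization_general m e hm φ₀ hker0 hker1 U V
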